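/- Suppose additionally that J₁ᵀ = J₁, J₂ᵀ = −J₂, J₃ᵀ = J₃. Let P ∈ M_{n²}(ℂ) be the matrix with entries P_{(a,b),(c,d)} = (1/n)·[a=b]·[c=d] (the projector onto the maximally entangled state). Then for every linear map L on matrices indexed by Fin n × Fin n satisfying L(A ⊗ B) = Φ(A) ⊗ Φ(B) for all A, B ∈ Mₙ(ℂ), one has n²·L(P) = Iₙ ⊗ Iₙ + (3/(j(j+1)))·(λ₁²·J₁⊗J₁ − λ₂²·J₂⊗J₂ + λ₃²·J₃⊗J₃). -/

import Mathlib

open Matrix Kronecker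
open scoped ComplexOrder

/-- The spin value `j = (n-1)/2` for an `n`-dimensional system. -/
noncomputable def spinJ (n : ℕ) : ℝ := ((n : ℝ) - 1) / 2

/-- The spin polarization-scaling map
`Φ(X) = (1/n)·tr(X)·Iₙ + (3/(j(j+1)n))·Σᵢ λᵢ·tr(X Jᵢ)·Jᵢ`. -/
noncomputable def Phi (n : ℕ) (J : Fin 3 → Matrix (Fin n) (Fin n) ℂ) (lam : Fin 3 → ℝ)
    (X : Matrix (Fin n) (Fin n) ℂ) : Matrix (Fin n) (Fin n) ℂ :=
  ((1 / (n : ℝ) : ℝ) : ℂ) • X.trace • (1 : Matrix (Fin n) (Fin n) ℂ) +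
    ((3 / (spinJ n * (spinJ n + 1) * n) : ℝ) : ℂ) •
      ∑ i : Fin 3, (lam i : ℂ) • (X * J i).trace • J i

/-!
Since `P = (1/n) ∑ₖₗ Eₖₗ ⊗ Eₖₗ`, the hypothesis on `L` gives
`n • L P = ∑ₖₗ Φ(Eₖₗ) ⊗ Φ(Eₖₗ)`. Write `Φ(X) = ∑ₐ tr(X Aₐ) Bₐ` with
`A = (I, J₁, J₂, J₃)`. Because `∑ₖₗ tr(Eₖₗ A) tr(Eₖₗ A') = tr(Aᵀ A')`, the sum becomes
`∑ₐ,ᵦ tr(Aₐᵀ Aᵦ) Bₐ ⊗ Bᵦ`. Tracelessness and orthogonality of the `Jᵢ`, together with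
`Jᵢᵀ = ±Jᵢ`, kill the off-diagonal terms, and on the diagonal `tr(J₂ᵀ J₂) = -tr(J₂²)`
produces the minus sign.
-/

namespace Matrix

variable {R ι m l n p q : Type*} [CommSemiring R]

theorem sum_kronecker (s : Finset ι) (A : ι → Matrix l m R) (B : Matrix n p R) :
    (∑ i ∈ s, A i) ⊗ₖ B = ∑ i ∈ s, A i ⊗ₖ B := by
  ext; simp [sum_apply, Finset.sum_mul]

theorem kronecker_sum (s : Finset ι) (A : Matrix l m R) (B : ι → Matrix n p R) :
    A ⊗ₖ (∑ i ∈ s, B i) = ∑ i ∈ s, A ⊗ₖ B i := by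
  ext; simp [sum_apply, Finset.mul_sum]

variable [Fintype m] [DecidableEq m]

theorem sum_single_kronecker_single :
    ∑ k : m, ∑ k' : m, single k k' (1 : R) ⊗ₖ single k k' 1 =
      of fun p q : m × m => (if p.1 = p.2 then 1 else 0) * (if q.1 = q.2 then 1 else 0) := by
  ext ⟨a, b⟩ ⟨c, d⟩
  by_cases hab : a = b <;> simp [sum_apply, single_apply, ite_and, eq_comm, hab]

theorem sum_trace_single_mul_mul_trace_single_mul (A B : Matrix m m R) :
    ∑ k : m, ∑ k' : m, (single k k' 1 * A).trace * (single k k' 1 * B).trace =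
      (Aᵀ * B).trace := by
  simp only [trace_single_mul, smul_eq_mul, one_mul]
  simp [trace, mul_apply]

variable [Fintype ι]

def traceForm (A : ι → Matrix m m R) (B : ι → Matrix l n R) (X : Matrix m m R) :
    Matrix l n R :=
  ∑ a, (X * A a).trace • B a

theorem sum_traceForm_single_kronecker (A A' : ι → Matrix m m R) (B : ι → Matrix l n R)
    (B' : ι → Matrix p q R) :
    ∑ k : m, ∑ k' : m, traceForm A B (single k k' 1) ⊗ₖ traceForm A' B' (single k k' 1) =
      ∑ a, ∑ b, ((A a)ᵀ * A' b).trace • (B a ⊗ₖ B' b) := by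
  simp only [traceForm, sum_kronecker, kronecker_sum, smul_kronecker, kronecker_smul,
    Finset.smul_sum, smul_smul, ← sum_trace_single_mul_mul_trace_single_mul, Finset.sum_smul]
  simp_rw [Finset.sum_comm (γ := m) (α := ι), mul_comm]
  exact Finset.sum_comm

theorem sum_traceForm_single_kronecker_of_pairwise (A : ι → Matrix m m R)
    (B : ι → Matrix l n R) (B' : ι → Matrix p q R)
    (hA : Pairwise fun a b => ((A a)ᵀ * A b).trace = 0) :
    ∑ k : m, ∑ k' : m, traceForm A B (single k k' 1) ⊗ₖ traceForm A B' (single k k' 1) =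
      ∑ a, ((A a)ᵀ * A a).trace • (B a ⊗ₖ B' a) := by
  rw [sum_traceForm_single_kronecker]
  refine Finset.sum_congr rfl fun a _ => Finset.sum_eq_single a (fun b _ hb => ?_) (by simp)
  rw [hA hb.symm, zero_smul]

end Matrix

theorem spinJ_pos {n : ℕ} (hn : 2 ≤ n) : 0 < spinJ n := by
  have : (2 : ℝ) ≤ n := by exact_mod_cast hn
  unfold spinJ; linarith

theorem two_mul_spinJ_add_one (n : ℕ) : 2 * spinJ n + 1 = n := by
  unfold spinJ; ring

section Phi

variable {n : ℕ} (J : Fin 3 → Matrix (Fin n) (Fin n) ℂ)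

/-- `Phi` as a `traceForm`: `none` indexes its identity part, `some i` its part along `J i`. -/
def phiInput : Option (Fin 3) → Matrix (Fin n) (Fin n) ℂ :=
  fun a => a.elim 1 J

noncomputable def phiOutput (lam : Fin 3 → ℝ) : Option (Fin 3) → Matrix (Fin n) (Fin n) ℂ :=
  fun a => a.elim (((1 / (n : ℝ) : ℝ) : ℂ) • 1)
    fun i => (((3 / (spinJ n * (spinJ n + 1) * n) : ℝ) : ℂ) * lam i) • J i

theorem Phi_eq_traceForm (lam : Fin 3 → ℝ) :
    Phi n J lam = traceForm (phiInput J) (phiOutput J lam) := by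
  ext1 X
  simp only [Phi, traceForm, Fintype.sum_option, phiInput, phiOutput, Option.elim, mul_one,
    Finset.smul_sum, smul_smul]
  congr 1
  · rw [mul_comm]
  · exact Finset.sum_congr rfl fun i _ => congrArg (· • J i) (by ring)

theorem pairwise_trace_transpose_phiInput_mul (htr : ∀ i, (J i).trace = 0)
    (horth : Pairwise fun i k => ((J i)ᵀ * J k).trace = 0) :
    Pairwise fun a b => ((phiInput J a)ᵀ * phiInput J b).trace = 0 := by
  rintro (_ | i) (_ | k) hne
  · exact absurd rfl hne
  · simpa [phiInput] using htr k
  · simpa [phiInput] using htr i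
  · exact horth (Option.some_injective _ |>.ne_iff.mp hne)

end Phi

theorem choi_matrix_of_squared_map_formula_general
    (n : ℕ) (hn : 2 ≤ n) (J : Fin 3 → Matrix (Fin n) (Fin n) ℂ)
    (htr : ∀ i, (J i).trace = 0)
    (htr2 : ∀ k l, (J k * J l).trace =
      if k = l then ((spinJ n * (spinJ n + 1) * (2 * spinJ n + 1) / 3 : ℝ) : ℂ) else 0)
    (hT1 : (J 0)ᵀ = J 0) (hT2 : (J 1)ᵀ = -(J 1)) (hT3 : (J 2)ᵀ = J 2)
    (lam : Fin 3 → ℝ)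
    (P : Matrix (Fin n × Fin n) (Fin n × Fin n) ℂ)
    (hP : P = Matrix.of fun p q : Fin n × Fin n =>
      (1 / (n : ℂ)) * (if p.1 = p.2 then 1 else 0) * (if q.1 = q.2 then 1 else 0)) :
    ∀ L : Matrix (Fin n × Fin n) (Fin n × Fin n) ℂ →ₗ[ℂ]
          Matrix (Fin n × Fin n) (Fin n × Fin n) ℂ,
      (∀ A B : Matrix (Fin n) (Fin n) ℂ, L (A ⊗ₖ B) = Phi n J lam A ⊗ₖ Phi n J lam B) →
      ((n : ℂ) ^ 2) • L P =
        (1 : Matrix (Fin n) (Fin n) ℂ) ⊗ₖ (1 : Matrix (Fin n) (Fin n) ℂ) +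
          ((3 / (spinJ n * (spinJ n + 1)) : ℝ) : ℂ) •
            (((lam 0 ^ 2 : ℝ) : ℂ) • (J 0 ⊗ₖ J 0) - ((lam 1 ^ 2 : ℝ) : ℂ) • (J 1 ⊗ₖ J 1) +
              ((lam 2 ^ 2 : ℝ) : ℂ) • (J 2 ⊗ₖ J 2)) := by
  intro L hL
  have hn0 : (n : ℂ) ≠ 0 := by norm_cast; omega
  have hj0 : (spinJ n : ℂ) ≠ 0 := by exact_mod_cast (spinJ_pos hn).ne'
  have hj1 : (spinJ n : ℂ) + 1 ≠ 0 := by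
    exact_mod_cast (add_pos (spinJ_pos hn) one_pos).ne'
  have hgram : ∀ i k,
      ((J i)ᵀ * J k).trace = (![1, -1, 1] : Fin 3 → ℂ) i * (J i * J k).trace := by
    intro i k; fin_cases i <;> simp [hT1, hT2, hT3]
  have horth : Pairwise fun i k => ((J i)ᵀ * J k).trace = 0 := by
    intro i k hik; rw [hgram, htr2, if_neg hik, mul_zero]
  have hP' : P = (1 / (n : ℂ)) • ∑ k, ∑ k', single k k' 1 ⊗ₖ single k k' 1 := by
    rw [hP, sum_single_kronecker_single]; ext; simp
  have hLP : L P = (1 / (n : ℂ)) • ∑ a, ((phiInput J a)ᵀ * phiInput J a).trace •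
      (phiOutput J lam a ⊗ₖ phiOutput J lam a) := by
    rw [hP', map_smul, map_sum]
    simp_rw [map_sum, hL, Phi_eq_traceForm]
    exact congrArg _ (sum_traceForm_single_kronecker_of_pairwise _ _ _
      (pairwise_trace_transpose_phiInput_mul J htr horth))
  rw [hLP, Fintype.sum_option, Fin.sum_univ_three]
  simp only [phiInput, phiOutput, Option.elim, hgram, htr2, two_mul_spinJ_add_one, if_pos,
    transpose_one, mul_one, trace_one, Fintype.card_fin, smul_kronecker, kronecker_smul, smul_smul]
  push_cast
  match_scalars <;> field_simp

theorem choi_matrix_of_squared_map_formula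
    (n : ℕ) (hn : 2 ≤ n) (J : Fin 3 → Matrix (Fin n) (Fin n) ℂ)
    (hherm : ∀ i, (J i).IsHermitian)
    (htr : ∀ i, (J i).trace = 0)
    (htr2 : ∀ k l, (J k * J l).trace =
      if k = l then ((spinJ n * (spinJ n + 1) * (2 * spinJ n + 1) / 3 : ℝ) : ℂ) else 0)
    (hT1 : (J 0)ᵀ = J 0) (hT2 : (J 1)ᵀ = -(J 1)) (hT3 : (J 2)ᵀ = J 2)
    (lam : Fin 3 → ℝ)
    (P : Matrix (Fin n × Fin n) (Fin n × Fin n) ℂ)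
    (hP : P = Matrix.of fun p q : Fin n × Fin n =>
      (1 / (n : ℂ)) * (if p.1 = p.2 then 1 else 0) * (if q.1 = q.2 then 1 else 0)) :
    ∀ L : Matrix (Fin n × Fin n) (Fin n × Fin n) ℂ →ₗ[ℂ]
          Matrix (Fin n × Fin n) (Fin n × Fin n) ℂ,
      (∀ A B : Matrix (Fin n) (Fin n) ℂ, L (A ⊗ₖ B) = Phi n J lam A ⊗ₖ Phi n J lam B) →
      ((n : ℂ) ^ 2) • L P =
        (1 : Matrix (Fin n) (Fin n) ℂ) ⊗ₖ (1 : Matrix (Fin n) (Fin n) ℂ) +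
          ((3 / (spinJ n * (spinJ n + 1)) : ℝ) : ℂ) •
            (((lam 0 ^ 2 : ℝ) : ℂ) • (J 0 ⊗ₖ J 0) - ((lam 1 ^ 2 : ℝ) : ℂ) • (J 1 ⊗ₖ J 1) +
              ((lam 2 ^ 2 : ℝ) : ℂ) • (J 2 ⊗ₖ J 2)) :=
  choi_matrix_of_squared_map_formula_general n hn J htr htr2 hT1 hT2 hT3 lam P hP
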